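/- arXiv:2206.05732 — 2 statements merged into one kernel-verified Lean document; each statement's English description precedes it below -/
import Mathlib

section
/- Let A be a real symmetric d×d matrix, b ∈ ℝ^d, and for each k let x_k minimize ‖b − A x‖ over K_k(A,b), with residual r_k = b − A x_k. Then for all indices i ≠ k with i, k ≥ 1, the residuals satisfy ⟨r_i, A r_k⟩ = 0. -/
/-!
The residual `r k` is the error of the best approximation of `b` from `A · K_k(A,b)`, hence is
orthogonal to that space. For `i < k`, `r i` lies in `K_{i+1}(A,b) ⊆ K_k(A,b)`, so
`⟪r k, A (r i)⟫ = 0`, and the symmetry of `A` turns this into `⟪r i, A (r k)⟫ = 0`.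
-/

open Matrix

noncomputable def Krylov {d : ℕ} (A : Matrix (Fin d) (Fin d) ℝ) (b : Fin d → ℝ) (k : ℕ) :
    Submodule ℝ (Fin d → ℝ) :=
  Submodule.span ℝ {v | ∃ i < k, v = (A ^ i).mulVec b}

noncomputable def enorm {d : ℕ} (v : Fin d → ℝ) : ℝ := Real.sqrt (v ⬝ᵥ v)

lemma enorm_le_enorm_iff {d : ℕ} {u v : Fin d → ℝ} :
    _root_.enorm u ≤ _root_.enorm v ↔ u ⬝ᵥ u ≤ v ⬝ᵥ v :=
  Real.sqrt_le_sqrt_iff (by simpa using dotProduct_star_self_nonneg v)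

lemma dotProduct_eq_zero_of_forall_le {n : Type*} [Fintype n] {r w : n → ℝ}
    (h : ∀ t : ℝ, r ⬝ᵥ r ≤ (r - t • w) ⬝ᵥ (r - t • w)) : r ⬝ᵥ w = 0 := by
  have hquad : ∀ t : ℝ, 0 ≤ (w ⬝ᵥ w) * (t * t) + (-2 * (r ⬝ᵥ w)) * t + 0 := by
    intro t
    have ht := h t
    simp only [sub_dotProduct, dotProduct_sub, smul_dotProduct, dotProduct_smul,
      smul_eq_mul, dotProduct_comm w r] at ht
    linarith
  have hdiscrim := discrim_le_zero hquad
  rw [discrim] at hdiscrim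
  nlinarith [sq_nonneg (r ⬝ᵥ w)]

lemma sub_mulVec_dotProduct_mulVec_eq_zero_of_isMin {d : ℕ} {A : Matrix (Fin d) (Fin d) ℝ}
    {b x : Fin d → ℝ} {S : Submodule ℝ (Fin d → ℝ)} (hx : x ∈ S)
    (hmin : ∀ y ∈ S, _root_.enorm (b - A *ᵥ x) ≤ _root_.enorm (b - A *ᵥ y))
    {v : Fin d → ℝ} (hv : v ∈ S) : (b - A *ᵥ x) ⬝ᵥ A *ᵥ v = 0 := by
  refine dotProduct_eq_zero_of_forall_le fun t => ?_
  have hy := enorm_le_enorm_iff.mp (hmin (x + t • v) (add_mem hx (S.smul_mem t hv)))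
  rwa [mulVec_add, mulVec_smul, sub_add_eq_sub_sub] at hy

lemma Krylov_mono {d : ℕ} (A : Matrix (Fin d) (Fin d) ℝ) (b : Fin d → ℝ) {i k : ℕ}
    (h : i ≤ k) : Krylov A b i ≤ Krylov A b k := by
  apply Submodule.span_mono
  rintro v ⟨j, hj, rfl⟩
  exact ⟨j, hj.trans_le h, rfl⟩

lemma mulVec_mem_Krylov_succ {d : ℕ} {A : Matrix (Fin d) (Fin d) ℝ} {b : Fin d → ℝ} {k : ℕ}
    {v : Fin d → ℝ} (hv : v ∈ Krylov A b k) : A *ᵥ v ∈ Krylov A b (k + 1) := by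
  induction hv using Submodule.span_induction with
  | mem v hv =>
    obtain ⟨j, hj, rfl⟩ := hv
    exact Submodule.subset_span ⟨j + 1, by omega, by rw [pow_succ', mulVec_mulVec]⟩
  | zero => simp
  | add u w _ _ hu hw => rw [mulVec_add]; exact add_mem hu hw
  | smul c u _ hu => rw [mulVec_smul]; exact Submodule.smul_mem _ c hu

lemma sub_mulVec_mem_Krylov_succ {d : ℕ} {A : Matrix (Fin d) (Fin d) ℝ} {b x : Fin d → ℝ}
    {k : ℕ} (hx : x ∈ Krylov A b k) : b - A *ᵥ x ∈ Krylov A b (k + 1) :=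
  sub_mem (Submodule.subset_span ⟨0, k.succ_pos, by simp⟩) (mulVec_mem_Krylov_succ hx)

lemma Matrix.IsSymm.dotProduct_mulVec_comm {n : Type*} [Fintype n] {A : Matrix n n ℝ}
    (hA : A.IsSymm) (u v : n → ℝ) : u ⬝ᵥ A *ᵥ v = v ⬝ᵥ A *ᵥ u := by
  rw [dotProduct_mulVec, ← mulVec_transpose, hA.eq, dotProduct_comm]

theorem stmt1 {d : ℕ} (A : Matrix (Fin d) (Fin d) ℝ) (hA : A.IsSymm)
    (b : Fin d → ℝ) (x : ℕ → (Fin d → ℝ))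
    (hmem : ∀ k, x k ∈ Krylov A b k)
    (hmin : ∀ k, ∀ y ∈ Krylov A b k,
      _root_.enorm (b - A.mulVec (x k)) ≤ _root_.enorm (b - A.mulVec y))
    (r : ℕ → (Fin d → ℝ)) (hr : ∀ k, r k = b - A.mulVec (x k)) :
    ∀ i k, 1 ≤ i → 1 ≤ k → i ≠ k → (r i) ⬝ᵥ (A.mulVec (r k)) = 0 := by
  rintro i k - - hik
  wlog hlt : i < k generalizing i k
  · rw [hA.dotProduct_mulVec_comm]
    exact this k i hik.symm (by omega)
  have hri : r i ∈ Krylov A b k := by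
    rw [hr]
    exact Krylov_mono A b hlt (sub_mulVec_mem_Krylov_succ (hmem i))
  rw [hA.dotProduct_mulVec_comm, hr k]
  exact sub_mulVec_dotProduct_mulVec_eq_zero_of_isMin (hmem k) (hmin k) hri
end

section
/- Let A be a real symmetric positive semidefinite matrix and b ∈ ℝ^d with b ∈ range(A), and let g be the grade of b with respect to A. Then T_g = V_gᵀ A V_g is positive definite, where V_g is a matrix with orthonormal columns spanning K_g(A,b). -/
open Matrix

/-!
Since `A` commutes with its powers, the Krylov space of a vector in the range of `A` lies in the
range of `A`. A symmetric matrix has range meeting its kernel only in `0`, and for positive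
semidefinite `A` the form `yᵀ A y` vanishes only on the kernel. So `(V x)ᵀ A (V x) = 0` forces
`V x = 0`, hence `x = Vᵀ V x = 0`.
-/

namespace Matrix

open scoped ComplexOrder

variable {𝕜 n m : Type*} [RCLike 𝕜] [Fintype n] [Fintype m]

theorem IsHermitian.eq_zero_of_mem_range_of_mulVec_eq_zero {A : Matrix n n 𝕜}
    (hA : A.IsHermitian) {v : n → 𝕜} (hv : v ∈ LinearMap.range A.mulVecLin)
    (hAv : A *ᵥ v = 0) : v = 0 := by
  obtain ⟨u, rfl⟩ := hv
  have hvA : star (A *ᵥ u) ᵥ* A = 0 := by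
    simpa only [mulVecLin_apply, star_mulVec, hA.eq, star_zero] using congrArg star hAv
  rw [← dotProduct_star_self_eq_zero, mulVecLin_apply, dotProduct_mulVec, hvA,
    zero_dotProduct]

theorem PosSemidef.posDef_conjTranspose_mul_mul_same {A : Matrix n n 𝕜} (hA : A.PosSemidef)
    (B : Matrix n m 𝕜) (hB : ∀ x, A *ᵥ (B *ᵥ x) = 0 → x = 0) : (Bᴴ * A * B).PosDef := by
  refine PosDef.of_dotProduct_mulVec_pos (isHermitian_conjTranspose_mul_mul B hA.1) fun x hx => ?_
  have hne : star (B *ᵥ x) ⬝ᵥ A *ᵥ (B *ᵥ x) ≠ 0 := fun h =>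
    hx (hB x ((hA.dotProduct_mulVec_zero_iff _).mp h))
  simpa only [star_mulVec, dotProduct_mulVec, vecMul_vecMul] using
    (hA.dotProduct_mulVec_nonneg (B *ᵥ x)).lt_of_ne' hne

end Matrix

theorem Krylov_le_range_mulVecLin {d : ℕ} (A : Matrix (Fin d) (Fin d) ℝ) {b : Fin d → ℝ}
    (hb : b ∈ LinearMap.range A.mulVecLin) (k : ℕ) :
    Krylov A b k ≤ LinearMap.range A.mulVecLin := by
  obtain ⟨x, rfl⟩ := hb
  refine Submodule.span_le.mpr ?_
  rintro v ⟨i, -, rfl⟩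
  refine ⟨(A ^ i) *ᵥ x, ?_⟩
  simp only [mulVecLin_apply, mulVec_mulVec, (Commute.self_pow A i).eq]

theorem stmt7_general {d g : ℕ} (A : Matrix (Fin d) (Fin d) ℝ) (hA : A.PosSemidef)
    (b : Fin d → ℝ) (hb : ∃ x : Fin d → ℝ, A.mulVec x = b)
    (V : Matrix (Fin d) (Fin g) ℝ) (hVo : Vᵀ * V = 1)
    (hVspan : Submodule.span ℝ (Set.range fun j => Vᵀ j) = Krylov A b g) :
    (Vᵀ * A * V).PosDef := by
  have hKrylov := Krylov_le_range_mulVecLin A hb g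
  have hVmem (x : Fin g → ℝ) : V *ᵥ x ∈ Krylov A b g := by
    rw [← hVspan]
    exact (range_mulVecLin V).le ⟨x, rfl⟩
  rw [← conjTranspose_eq_transpose_of_trivial]
  refine hA.posDef_conjTranspose_mul_mul_same V fun x hx => ?_
  have hVx : V *ᵥ x = 0 :=
    hA.isHermitian.eq_zero_of_mem_range_of_mulVec_eq_zero (hKrylov (hVmem x)) hx
  rw [← one_mulVec x, ← hVo, ← mulVec_mulVec, hVx, mulVec_zero]

theorem stmt7 {d g : ℕ} (A : Matrix (Fin d) (Fin d) ℝ) (hA : A.PosSemidef)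
    (b : Fin d → ℝ) (hb : ∃ x : Fin d → ℝ, A.mulVec x = b)
    -- `g` is the grade of `b` with respect to `A`
    (hgrade : ∀ j, Module.finrank ℝ (Krylov A b j) = min j g)
    (V : Matrix (Fin d) (Fin g) ℝ) (hVo : Vᵀ * V = 1)
    (hVspan : Submodule.span ℝ (Set.range fun j => Vᵀ j) = Krylov A b g) :
    (Vᵀ * A * V).PosDef :=
  stmt7_general A hA b hb V hVo hVspan
end
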